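/- Let k ≥ 2 be an integer, a₁ ∈ ℂ, and λ : ℕ → ℝ with |λ(n)| ≤ τ(n) for all n ≥ 1. Define f(iy) := a₁ · Σ_{n≥1} λ(n)·(4πn)^{(k−1)/2}·e^{−2πny} for y > 0. Then for every y₀ > 0, ∫_{y₀}^{∞} |f(iy)|² · y^{k} dy / y = (|a₁|² / (2π)) · Σ_{l ≥ 2} T(l) · Γ(k, 2πy₀ l) / l, where T(l) := Σ_{m=1}^{l−1} λ(m)·λ(l−m)·( 2√(m(l−m)) / l )^{k−1} and Γ(a,z) := ∫_z^{∞} t^{a−1} e^{−t} dt, and all sums and integrals converge absolutely. -/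

import Mathlib

open MeasureTheory

/-- The upper incomplete Gamma function `Γ(a,z) = ∫_z^∞ t^{a-1} e^{-t} dt`. -/
noncomputable def upperGamma (a z : ℝ) : ℝ :=
  ∫ t in Set.Ioi z, t ^ (a - 1) * Real.exp (-t)

/-- The restriction to the vertical geodesic:
`f(iy) = a₁ ∑_{n≥1} λ(n) (4πn)^{(k-1)/2} e^{-2πny}`. -/
noncomputable def geodesicSeries (k : ℕ) (a₁ : ℂ) (lam : ℕ → ℝ) (y : ℝ) : ℂ :=
  a₁ * ∑' n : ℕ, ((lam (n + 1) : ℝ) : ℂ) *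
    (((4 * Real.pi * ((n : ℝ) + 1)) ^ (((k : ℝ) - 1) / 2) : ℝ) : ℂ) *
    ((Real.exp (-2 * Real.pi * ((n : ℝ) + 1) * y) : ℝ) : ℂ)

/-- The shifted convolution sum `T(l) = ∑_{m+n=l} λ(m)λ(n)(2√(mn)/l)^{k-1}`. -/
noncomputable def shiftedSum (k : ℕ) (lam : ℕ → ℝ) (l : ℕ) : ℝ :=
  ∑ m ∈ Finset.Ico 1 l, lam m * lam (l - m) *
    (2 * Real.sqrt ((m : ℝ) * ((l - m : ℕ) : ℝ)) / (l : ℝ)) ^ (k - 1)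

open Real Set

section Helpers

noncomputable def cf (k : ℕ) (lam : ℕ → ℝ) (n : ℕ) : ℝ :=
  lam n * (4 * Real.pi * n) ^ (((k:ℝ)-1)/2)

/-- the single-series term -/
noncomputable def tF (k : ℕ) (lam : ℕ → ℝ) (n : ℕ) (y : ℝ) : ℝ :=
  cf k lam (n+1) * Real.exp (-2 * Real.pi * ((n:ℝ)+1) * y)

/-- the double-series term (with the weight `y^(k-1)`) -/
noncomputable def FF (k : ℕ) (lam : ℕ → ℝ) (p : ℕ × ℕ) (y : ℝ) : ℝ :=
  cf k lam (p.1+1) * cf k lam (p.2+1) *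
    (y ^ (k-1) * Real.exp (-((2 * Real.pi * ((p.1:ℝ) + (p.2:ℝ) + 2)) * y)))

lemma FF_eq (k : ℕ) (lam : ℕ → ℝ) (p : ℕ × ℕ) (y : ℝ) :
    FF k lam p y = tF k lam p.1 y * tF k lam p.2 y * y ^ (k-1) := by
  have he : Real.exp (-2*Real.pi*((p.1:ℝ)+1)*y) * Real.exp (-2*Real.pi*((p.2:ℝ)+1)*y)
      = Real.exp (-((2*Real.pi*((p.1:ℝ)+(p.2:ℝ)+2))*y)) := by
    rw [← Real.exp_add]; congr 1; ring
  simp only [FF, tF]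
  rw [← he]
  ring

lemma tau_le (n : ℕ) : (n.divisors.card : ℝ) ≤ n := by
  have h : n.divisors.card ≤ n := by
    have h1 : n.divisors ⊆ Finset.Ico 1 (n+1) := Finset.filter_subset _ _
    calc n.divisors.card ≤ (Finset.Ico 1 (n+1)).card := Finset.card_le_card h1
      _ = n := by simp
  exact_mod_cast h

lemma pow_le_factorial_mul_exp (n : ℕ) {y : ℝ} (hy : 0 ≤ y) :
    y ^ n ≤ n.factorial * Real.exp y := by
  have h := Real.sum_le_exp_of_nonneg hy (n+1)
  have h2 : y ^ n / n.factorial ≤ Real.exp y := by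
    refine le_trans ?_ h
    refine Finset.single_le_sum (f := fun i => y ^ i / i.factorial) ?_ (Finset.self_mem_range_succ n)
    intro i _
    positivity
  have hf : (0:ℝ) < n.factorial := by positivity
  rw [div_le_iff₀ hf] at h2
  linarith [h2]

lemma cf_bound {k : ℕ} (hk : 2 ≤ k) {lam : ℕ → ℝ}
    (hlam : ∀ n : ℕ, 1 ≤ n → |lam n| ≤ (n.divisors.card : ℝ)) {n : ℕ} (hn : 1 ≤ n) :
    |cf k lam n| ≤ (4*Real.pi) ^ (((k:ℝ)-1)/2) * (n:ℝ) ^ k := by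
  have hπ : (0:ℝ) < Real.pi := Real.pi_pos
  have hn1 : (1:ℝ) ≤ (n:ℝ) := by exact_mod_cast hn
  have hn0 : (0:ℝ) ≤ (n:ℝ) := by linarith
  have he : (0:ℝ) ≤ ((k:ℝ)-1)/2 := by
    have : (2:ℝ) ≤ (k:ℝ) := by exact_mod_cast hk
    linarith
  have h1 : |cf k lam n| = |lam n| * (4*Real.pi*n) ^ (((k:ℝ)-1)/2) := by
    rw [cf, abs_mul, abs_of_nonneg (Real.rpow_nonneg (by positivity) _)]
  rw [h1]
  have h2 : |lam n| ≤ (n:ℝ) := le_trans (hlam n hn) (tau_le n)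
  have h3 : (4*Real.pi*n) ^ (((k:ℝ)-1)/2) = (4*Real.pi) ^ (((k:ℝ)-1)/2) * (n:ℝ) ^ (((k:ℝ)-1)/2) := by
    rw [← Real.mul_rpow (by positivity) hn0]
  have h4 : (n:ℝ) ^ (((k:ℝ)-1)/2) ≤ (n:ℝ) ^ ((k:ℝ)-1) := by
    apply Real.rpow_le_rpow_of_exponent_le hn1
    have : (2:ℝ) ≤ (k:ℝ) := by exact_mod_cast hk
    linarith
  have h5 : (n:ℝ) * (n:ℝ) ^ ((k:ℝ)-1) = (n:ℝ) ^ k := by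
    nth_rewrite 1 [← Real.rpow_one (n:ℝ)]
    rw [← Real.rpow_add' hn0 (by norm_num; omega), ← Real.rpow_natCast (n:ℝ) k]
    norm_num
  calc |lam n| * (4*Real.pi*n) ^ (((k:ℝ)-1)/2)
      ≤ (n:ℝ) * ((4*Real.pi) ^ (((k:ℝ)-1)/2) * (n:ℝ) ^ ((k:ℝ)-1)) := by
        rw [h3]
        apply mul_le_mul h2 (by
          exact mul_le_mul_of_nonneg_left h4 (Real.rpow_nonneg (by positivity) _))
          (by positivity) hn0
    _ = (4*Real.pi) ^ (((k:ℝ)-1)/2) * (n:ℝ) ^ k := by rw [← h5]; ring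

/-- summability of `(n+1)^k * exp(-c*(n+1))` for `c > 0`. -/
lemma summable_u (k : ℕ) {c : ℝ} (hc : 0 < c) :
    Summable (fun n : ℕ => ((n:ℝ)+1) ^ k * Real.exp (-c * ((n:ℝ)+1))) := by
  have hr : ‖Real.exp (-c)‖ < 1 := by
    rw [Real.norm_eq_abs, abs_of_pos (Real.exp_pos _)]
    exact Real.exp_lt_one_iff.mpr (by linarith)
  have h := summable_pow_mul_geometric_of_norm_lt_one (R := ℝ) k hr
  have h2 := (summable_nat_add_iff 1).mpr h
  refine h2.congr fun n => ?_
  have : Real.exp (-c) ^ (n+1) = Real.exp (-c * ((n:ℝ)+1)) := by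
    rw [← Real.exp_nat_mul]
    congr 1
    push_cast
    ring
  push_cast
  rw [this]

lemma integral_exp_neg_mul_Ioi' {c : ℝ} (hc : 0 < c) (a : ℝ) :
    ∫ x in Ioi a, Real.exp (-(c * x)) = Real.exp (-(c * a)) / c := by
  have h := integral_comp_mul_left_Ioi (fun t => Real.exp (-t)) a hc
  simp only [smul_eq_mul] at h
  rw [h, integral_exp_neg_Ioi]
  rw [inv_mul_eq_div]

lemma J_ptle (k : ℕ) {b y : ℝ} (hy : 0 < y) :
    y ^ (k-1) * Real.exp (-(b*y)) ≤ (k-1).factorial * Real.exp (-((b-1)*y)) := by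
  have h1 : y ^ (k-1) ≤ (k-1).factorial * Real.exp y := pow_le_factorial_mul_exp _ hy.le
  have h2 : Real.exp y * Real.exp (-(b*y)) = Real.exp (-((b-1)*y)) := by
    rw [← Real.exp_add]; ring_nf
  calc y ^ (k-1) * Real.exp (-(b*y)) ≤ ((k-1).factorial * Real.exp y) * Real.exp (-(b*y)) := by
        exact mul_le_mul_of_nonneg_right h1 (Real.exp_pos _).le
    _ = (k-1).factorial * Real.exp (-((b-1)*y)) := by rw [mul_assoc, h2]

/-- Integrability of `y^(k-1) exp(-(b*y))` on `Ioi y₀`. -/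
lemma J_integrable (k : ℕ) {b : ℝ} (hb : 2 ≤ b) {y₀ : ℝ} (hy₀ : 0 < y₀) :
    IntegrableOn (fun y : ℝ => y ^ (k-1) * Real.exp (-(b*y))) (Ioi y₀) := by
  have hb1 : (0:ℝ) < b - 1 := by linarith
  have hg : IntegrableOn (fun y : ℝ => ((k-1).factorial : ℝ) * Real.exp (-((b-1)*y))) (Ioi y₀) := by
    have := (exp_neg_integrableOn_Ioi y₀ hb1).const_mul (((k-1).factorial : ℝ))
    simpa only [neg_mul, IntegrableOn] using this
  refine Integrable.mono' hg ?_ ?_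
  · exact ((continuous_pow _).mul
      (Real.continuous_exp.comp (continuous_const.mul continuous_id).neg)).aestronglyMeasurable
  · filter_upwards [ae_restrict_mem measurableSet_Ioi] with y hy
    have hy0 : 0 < y := lt_trans hy₀ hy
    rw [Real.norm_eq_abs, abs_of_nonneg (by positivity)]
    exact J_ptle k hy0

lemma J_le (k : ℕ) {b : ℝ} (hb : 2 ≤ b) {y₀ : ℝ} (hy₀ : 0 < y₀) :
    ∫ y in Ioi y₀, y ^ (k-1) * Real.exp (-(b*y)) ≤
      (k-1).factorial * Real.exp y₀ * Real.exp (-(b*y₀)) := by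
  have hb1 : (0:ℝ) < b - 1 := by linarith
  have hg : IntegrableOn (fun y : ℝ => ((k-1).factorial : ℝ) * Real.exp (-((b-1)*y))) (Ioi y₀) := by
    have := (exp_neg_integrableOn_Ioi y₀ hb1).const_mul (((k-1).factorial : ℝ))
    simpa only [neg_mul, IntegrableOn] using this
  have h1 : ∫ y in Ioi y₀, y ^ (k-1) * Real.exp (-(b*y)) ≤
      ∫ y in Ioi y₀, ((k-1).factorial : ℝ) * Real.exp (-((b-1)*y)) := by
    refine setIntegral_mono_on (J_integrable k hb hy₀) hg measurableSet_Ioi ?_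
    intro y hy
    exact J_ptle k (lt_trans hy₀ hy)
  have h2 : ∫ y in Ioi y₀, ((k-1).factorial : ℝ) * Real.exp (-((b-1)*y)) =
      ((k-1).factorial : ℝ) * (Real.exp (-((b-1)*y₀)) / (b-1)) := by
    rw [MeasureTheory.integral_const_mul, integral_exp_neg_mul_Ioi' hb1]
  refine h1.trans ?_
  rw [h2]
  have h3 : Real.exp (-((b-1)*y₀)) / (b-1) ≤ Real.exp (-((b-1)*y₀)) := by
    apply div_le_self (Real.exp_pos _).le (by linarith)
  have h4 : Real.exp (-((b-1)*y₀)) = Real.exp y₀ * Real.exp (-(b*y₀)) := by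
    rw [← Real.exp_add]; ring_nf
  calc ((k-1).factorial : ℝ) * (Real.exp (-((b-1)*y₀)) / (b-1))
      ≤ ((k-1).factorial : ℝ) * Real.exp (-((b-1)*y₀)) := by
        exact mul_le_mul_of_nonneg_left h3 (by positivity)
    _ = (k-1).factorial * Real.exp y₀ * Real.exp (-(b*y₀)) := by rw [h4]; ring

lemma upperGamma_eq_natpow (k : ℕ) (hk : 1 ≤ k) (z : ℝ) :
    upperGamma (k:ℝ) z = ∫ t in Ioi z, t ^ (k-1) * Real.exp (-t) := by
  unfold upperGamma
  have h : ∀ t : ℝ, t ^ ((k:ℝ)-1) = t ^ (k-1 : ℕ) := by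
    intro t
    rw [← Real.rpow_natCast t (k-1)]
    congr 1
    push_cast [Nat.cast_sub hk]
    ring
  simp_rw [h]

lemma J_val (k : ℕ) (hk : 1 ≤ k) {b : ℝ} (hb : 0 < b) (y₀ : ℝ) :
    ∫ y in Ioi y₀, y ^ (k-1) * Real.exp (-(b*y)) = upperGamma (k:ℝ) (b*y₀) / b ^ k := by
  have h := integral_comp_mul_left_Ioi (fun t => t ^ (k-1) * Real.exp (-t)) y₀ hb
  simp only [smul_eq_mul] at h
  rw [upperGamma_eq_natpow k hk]
  simp only [mul_pow, mul_assoc] at h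
  rw [MeasureTheory.integral_const_mul] at h
  have hbk : (0:ℝ) < b ^ (k-1) := by positivity
  rw [eq_div_iff (by positivity : (b:ℝ)^k ≠ 0)]
  have hpow : b ^ k = b ^ (k-1) * b := by
    conv_lhs => rw [show k = (k-1)+1 by omega]
    rw [pow_succ]
  rw [hpow]
  field_simp at h
  linear_combination h

lemma rpow_pair_id (k : ℕ) (hk : 2 ≤ k) {m n : ℝ} (hm : 1 ≤ m) (hn : 1 ≤ n) :
    (4*Real.pi*m) ^ (((k:ℝ)-1)/2) * (4*Real.pi*n) ^ (((k:ℝ)-1)/2) / (2*Real.pi*(m+n)) ^ k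
      = (2 * Real.sqrt (m*n) / (m+n)) ^ (k-1) / (2*Real.pi*(m+n)) := by
  have hπ := Real.pi_pos
  have hm0 : (0:ℝ) < m := by linarith
  have hn0 : (0:ℝ) < n := by linarith
  have hL : (0:ℝ) < m + n := by linarith
  set s := Real.sqrt (m*n) with hs
  have hs0 : 0 < s := Real.sqrt_pos.mpr (by positivity)
  have hs2 : s^2 = m*n := Real.sq_sqrt (by positivity)
  have hA : (4*Real.pi*m) ^ (((k:ℝ)-1)/2) * (4*Real.pi*n) ^ (((k:ℝ)-1)/2)
      = (4*Real.pi*s) ^ (k-1 : ℕ) := by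
    rw [← Real.mul_rpow (by positivity) (by positivity)]
    have h1 : (4*Real.pi*m) * (4*Real.pi*n) = (4*Real.pi*s)^(2:ℕ) := by
      have : (4*Real.pi*s)^(2:ℕ) = (4*Real.pi)^(2:ℕ) * s^2 := by ring
      rw [this, hs2]; ring
    rw [h1, ← Real.rpow_natCast (4*Real.pi*s) 2, ← Real.rpow_mul (by positivity)]
    rw [← Real.rpow_natCast (4*Real.pi*s) (k-1)]
    congr 1
    push_cast [Nat.cast_sub (by omega : 1 ≤ k)]
    ring
  rw [hA]
  have hq : 2*s/(m+n) = (4*Real.pi*s)/(2*Real.pi*(m+n)) := by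
    field_simp
    ring
  rw [hq, div_pow, div_div, ← pow_succ, show k-1+1 = k by omega]

def antidiagEquiv : (Σ l : ℕ, Fin (l+1)) ≃ ℕ × ℕ where
  toFun x := (x.2.1, x.1 - x.2.1)
  invFun p := ⟨p.1 + p.2, ⟨p.1, by omega⟩⟩
  left_inv := by
    rintro ⟨l, ⟨i, hi⟩⟩
    have h : i + (l - i) = l := by omega
    dsimp only
    refine Sigma.ext h ?_
    rw [Fin.heq_ext_iff (by simp [h])]
  right_inv := by
    rintro ⟨m, n⟩
    simp

end Helpers

section Main

variable {k : ℕ} {lam : ℕ → ℝ}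

lemma cf_succ_bound (hk : 2 ≤ k)
    (hlam : ∀ n : ℕ, 1 ≤ n → |lam n| ≤ (n.divisors.card : ℝ)) (n : ℕ) :
    |cf k lam (n+1)| ≤ (4*Real.pi) ^ (((k:ℝ)-1)/2) * ((n:ℝ)+1) ^ k := by
  have h := cf_bound hk hlam (show 1 ≤ n+1 by omega)
  have hc : ((n+1 : ℕ):ℝ) = (n:ℝ)+1 := by push_cast; ring
  rwa [hc] at h

lemma summable_abs_tF (hk : 2 ≤ k)
    (hlam : ∀ n : ℕ, 1 ≤ n → |lam n| ≤ (n.divisors.card : ℝ)) {y : ℝ} (hy : 0 < y) :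
    Summable (fun n : ℕ => |tF k lam n y|) := by
  have hπ := Real.pi_pos
  have hsum := (summable_u k (c := 2*Real.pi*y) (by positivity)).mul_left
    ((4*Real.pi) ^ (((k:ℝ)-1)/2))
  refine Summable.of_nonneg_of_le (fun n => abs_nonneg _) (fun n => ?_) hsum
  have he : Real.exp (-2*Real.pi*((n:ℝ)+1)*y) = Real.exp (-(2*Real.pi*y) * ((n:ℝ)+1)) := by
    congr 1; ring
  calc |tF k lam n y| = |cf k lam (n+1)| * Real.exp (-2*Real.pi*((n:ℝ)+1)*y) := by
        rw [tF, abs_mul, abs_of_pos (Real.exp_pos _)]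
    _ ≤ ((4*Real.pi) ^ (((k:ℝ)-1)/2) * ((n:ℝ)+1)^k) * Real.exp (-2*Real.pi*((n:ℝ)+1)*y) := by
        exact mul_le_mul_of_nonneg_right (cf_succ_bound hk hlam n) (Real.exp_pos _).le
    _ = (4*Real.pi) ^ (((k:ℝ)-1)/2) * (((n:ℝ)+1)^k * Real.exp (-(2*Real.pi*y) * ((n:ℝ)+1))) := by
        rw [he]; ring

lemma tF_complex (k : ℕ) (lam : ℕ → ℝ) (n : ℕ) (y : ℝ) :
    ((lam (n + 1) : ℝ) : ℂ) *
      (((4 * Real.pi * ((n : ℝ) + 1)) ^ (((k : ℝ) - 1) / 2) : ℝ) : ℂ) *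
      ((Real.exp (-2 * Real.pi * ((n : ℝ) + 1) * y) : ℝ) : ℂ) = ((tF k lam n y : ℝ) : ℂ) := by
  simp only [tF, cf]
  push_cast
  ring

lemma geo_eq (k : ℕ) (a₁ : ℂ) (lam : ℕ → ℝ) (y : ℝ) :
    geodesicSeries k a₁ lam y = a₁ * ((∑' n : ℕ, tF k lam n y : ℝ) : ℂ) := by
  unfold geodesicSeries
  congr 1
  rw [Complex.ofReal_tsum]
  exact tsum_congr fun n => tF_complex k lam n y

lemma pointwise_eq (hk : 2 ≤ k)
    (hlam : ∀ n : ℕ, 1 ≤ n → |lam n| ≤ (n.divisors.card : ℝ)) (a₁ : ℂ) {y : ℝ} (hy : 0 < y) :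
    ‖geodesicSeries k a₁ lam y‖^2 * y^k / y = ‖a₁‖^2 * ∑' p : ℕ × ℕ, FF k lam p y := by
  have hts : Summable (fun n => |tF k lam n y|) := summable_abs_tF hk hlam hy
  have hts' : Summable (fun n => tF k lam n y) := hts.of_abs
  have hnorm2 : ‖geodesicSeries k a₁ lam y‖^2 = ‖a₁‖^2 * (∑' n, tF k lam n y)^2 := by
    rw [geo_eq, norm_mul, mul_pow, Complex.norm_real, Real.norm_eq_abs, sq_abs]
  have hprod : (∑' n, tF k lam n y)^2 = ∑' p : ℕ × ℕ, tF k lam p.1 y * tF k lam p.2 y := by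
    rw [sq]
    exact tsum_mul_tsum_of_summable_norm
      (by simpa [Real.norm_eq_abs] using hts) (by simpa [Real.norm_eq_abs] using hts)
  have hyk : y^k / y = y^(k-1) := by
    have h : k = (k-1)+1 := by omega
    calc y^k/y = y^((k-1)+1)/y := by rw [← h]
      _ = y^(k-1) := by rw [pow_succ]; field_simp
  calc ‖geodesicSeries k a₁ lam y‖^2 * y^k / y
      = ‖geodesicSeries k a₁ lam y‖^2 * (y^k / y) := by ring
    _ = ‖a₁‖^2 * ((∑' p : ℕ × ℕ, tF k lam p.1 y * tF k lam p.2 y) * y^(k-1)) := by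
        rw [hnorm2, hprod, hyk]; ring
    _ = ‖a₁‖^2 * ∑' p : ℕ × ℕ, FF k lam p y := by
        rw [← tsum_mul_right]
        congr 1
        exact tsum_congr fun p => (FF_eq k lam p y).symm

noncomputable def bb (k : ℕ) (y₀ : ℝ) (p : ℕ × ℕ) : ℝ :=
  ((4*Real.pi) ^ (((k:ℝ)-1)/2) * (4*Real.pi) ^ (((k:ℝ)-1)/2) * (k-1).factorial * Real.exp y₀) *
    ((((p.1:ℝ)+1)^k * Real.exp (-(2*Real.pi*y₀) * ((p.1:ℝ)+1))) *
     (((p.2:ℝ)+1)^k * Real.exp (-(2*Real.pi*y₀) * ((p.2:ℝ)+1))))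

lemma bb_summable (k : ℕ) {y₀ : ℝ} (hy₀ : 0 < y₀) : Summable (bb k y₀) := by
  have hπ := Real.pi_pos
  have hu := summable_u k (c := 2*Real.pi*y₀) (by positivity)
  exact ((hu.mul_of_nonneg hu (fun n => by positivity) (fun n => by positivity)).mul_left _)

lemma b_ge_two (p : ℕ × ℕ) : (2:ℝ) ≤ 2*Real.pi*((p.1:ℝ)+(p.2:ℝ)+2) := by
  have hπ := Real.pi_gt_three
  have h1 : (0:ℝ) ≤ (p.1:ℝ) := Nat.cast_nonneg _
  have h2 : (0:ℝ) ≤ (p.2:ℝ) := Nat.cast_nonneg _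
  nlinarith

lemma FF_integrable (k : ℕ) (lam : ℕ → ℝ) {y₀ : ℝ} (hy₀ : 0 < y₀) (p : ℕ × ℕ) :
    IntegrableOn (FF k lam p) (Ioi y₀) := by
  have := (J_integrable k (b_ge_two p) hy₀).const_mul (cf k lam (p.1+1) * cf k lam (p.2+1))
  exact this

lemma FF_norm_integral_eq (k : ℕ) (lam : ℕ → ℝ) {y₀ : ℝ} (hy₀ : 0 < y₀) (p : ℕ × ℕ) :
    ∫ y in Ioi y₀, ‖FF k lam p y‖ =
      |cf k lam (p.1+1) * cf k lam (p.2+1)| *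
        ∫ y in Ioi y₀, y ^ (k-1) * Real.exp (-((2*Real.pi*((p.1:ℝ)+(p.2:ℝ)+2)) * y)) := by
  rw [← MeasureTheory.integral_const_mul]
  refine setIntegral_congr_fun measurableSet_Ioi (fun y hy => ?_)
  have hy0 : 0 < y := hy₀.trans hy
  simp only [FF]
  rw [Real.norm_eq_abs, abs_mul, abs_of_nonneg (by positivity : (0:ℝ) ≤ y^(k-1) * Real.exp _)]

lemma FF_norm_integral_le (hk : 2 ≤ k)
    (hlam : ∀ n : ℕ, 1 ≤ n → |lam n| ≤ (n.divisors.card : ℝ)) {y₀ : ℝ} (hy₀ : 0 < y₀)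
    (p : ℕ × ℕ) :
    ∫ y in Ioi y₀, ‖FF k lam p y‖ ≤ bb k y₀ p := by
  have hπ := Real.pi_pos
  rw [FF_norm_integral_eq k lam hy₀ p]
  have hJ := J_le k (b_ge_two p) hy₀
  have hcf1 := cf_succ_bound hk hlam p.1
  have hcf2 := cf_succ_bound hk hlam p.2
  have habs : |cf k lam (p.1+1) * cf k lam (p.2+1)| ≤
      ((4*Real.pi) ^ (((k:ℝ)-1)/2) * ((p.1:ℝ)+1)^k) *
      ((4*Real.pi) ^ (((k:ℝ)-1)/2) * ((p.2:ℝ)+1)^k) := by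
    rw [abs_mul]
    exact mul_le_mul hcf1 hcf2 (abs_nonneg _) (by positivity)
  have hsplit : Real.exp (-((2*Real.pi*((p.1:ℝ)+(p.2:ℝ)+2)) * y₀)) =
      Real.exp (-(2*Real.pi*y₀) * ((p.1:ℝ)+1)) * Real.exp (-(2*Real.pi*y₀) * ((p.2:ℝ)+1)) := by
    rw [← Real.exp_add]; congr 1; ring
  have hJ0 : 0 ≤ ∫ y in Ioi y₀, y ^ (k-1) * Real.exp (-((2*Real.pi*((p.1:ℝ)+(p.2:ℝ)+2)) * y)) := by
    refine setIntegral_nonneg measurableSet_Ioi (fun y hy => ?_)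
    have : 0 < y := hy₀.trans hy
    positivity
  calc |cf k lam (p.1+1) * cf k lam (p.2+1)| *
        ∫ y in Ioi y₀, y ^ (k-1) * Real.exp (-((2*Real.pi*((p.1:ℝ)+(p.2:ℝ)+2)) * y))
      ≤ (((4*Real.pi) ^ (((k:ℝ)-1)/2) * ((p.1:ℝ)+1)^k) *
         ((4*Real.pi) ^ (((k:ℝ)-1)/2) * ((p.2:ℝ)+1)^k)) *
        ((k-1).factorial * Real.exp y₀ *
          Real.exp (-((2*Real.pi*((p.1:ℝ)+(p.2:ℝ)+2)) * y₀))) := by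
        exact mul_le_mul habs hJ hJ0 (by positivity)
    _ = bb k y₀ p := by rw [bb, hsplit]; ring

lemma FF_norm_summable (hk : 2 ≤ k)
    (hlam : ∀ n : ℕ, 1 ≤ n → |lam n| ≤ (n.divisors.card : ℝ)) {y₀ : ℝ} (hy₀ : 0 < y₀) :
    Summable (fun p : ℕ × ℕ => ∫ y in Ioi y₀, ‖FF k lam p y‖) := by
  refine Summable.of_nonneg_of_le (fun p => ?_) (fun p => FF_norm_integral_le hk hlam hy₀ p)
    (bb_summable k hy₀)
  exact integral_nonneg (fun y => norm_nonneg _)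

lemma FF_integral_val (hk : 2 ≤ k) (lam : ℕ → ℝ) {y₀ : ℝ} (hy₀ : 0 < y₀) (p : ℕ × ℕ) :
    ∫ y in Ioi y₀, FF k lam p y =
      cf k lam (p.1+1) * cf k lam (p.2+1) *
        (upperGamma (k:ℝ) ((2*Real.pi*((p.1:ℝ)+(p.2:ℝ)+2)) * y₀) /
          (2*Real.pi*((p.1:ℝ)+(p.2:ℝ)+2)) ^ k) := by
  have hb0 : (0:ℝ) < 2*Real.pi*((p.1:ℝ)+(p.2:ℝ)+2) := lt_of_lt_of_le two_pos (b_ge_two p)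
  simp only [FF]
  rw [MeasureTheory.integral_const_mul, J_val k (by omega) hb0 y₀]

end Main

section Inner

variable {k : ℕ} {lam : ℕ → ℝ}

lemma inner_eq (hk : 2 ≤ k) (lam : ℕ → ℝ) {y₀ : ℝ} (hy₀ : 0 < y₀) (l : ℕ) :
    (∑' i : Fin (l+1), ∫ y in Ioi y₀, FF k lam (antidiagEquiv ⟨l, i⟩) y)
      = 1/(2*Real.pi) *
        (shiftedSum k lam (l+2) * upperGamma (k:ℝ) (2*Real.pi*y₀*((l:ℝ)+2)) / ((l:ℝ)+2)) := by
  have hπ := Real.pi_pos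
  rw [tsum_fintype]
  set Γ' : ℝ := upperGamma (k:ℝ) (2*Real.pi*y₀*((l:ℝ)+2)) with hΓ'
  set G : ℕ → ℝ := fun j => cf k lam (j+1) * cf k lam (l-j+1) *
    (Γ' / (2*Real.pi*((l:ℝ)+2)) ^ k) with hG
  have hval : ∀ i : Fin (l+1), ∫ y in Ioi y₀, FF k lam (antidiagEquiv ⟨l, i⟩) y = G i.1 := by
    intro i
    have hil : (i.1:ℕ) ≤ l := by omega
    have hcast : ((l - i.1 : ℕ) : ℝ) = (l:ℝ) - (i.1:ℝ) := by
      exact Nat.cast_sub hil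
    show ∫ y in Ioi y₀, FF k lam (i.1, l - i.1) y = G i.1
    rw [FF_integral_val hk lam hy₀]
    simp only [hG]
    rw [hcast]
    have harg : (2*Real.pi*((i.1:ℝ)+((l:ℝ)-(i.1:ℝ))+2)) = 2*Real.pi*((l:ℝ)+2) := by ring
    rw [harg]
    congr 2
    rw [hΓ']
    congr 1
    ring
  rw [Finset.sum_congr rfl (fun i _ => hval i)]
  rw [Fin.sum_univ_eq_sum_range G (l+1)]
  rw [shiftedSum, Finset.sum_Ico_eq_sum_range]
  have hlen : l + 2 - 1 = l + 1 := rfl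
  rw [hlen]
  rw [Finset.sum_mul, Finset.sum_div, Finset.mul_sum]
  refine Finset.sum_congr rfl (fun j hj => ?_)
  have hjl : j ≤ l := by
    have := Finset.mem_range.mp hj; omega
  have hjl' : ((j:ℝ)) ≤ (l:ℝ) := by exact_mod_cast hjl
  have hnat : l + 2 - (1 + j) = l - j + 1 := by omega
  rw [hnat]
  have hm : (1:ℝ) ≤ (j:ℝ)+1 := by linarith [Nat.cast_nonneg (α := ℝ) j]
  have hn : (1:ℝ) ≤ (l:ℝ)-(j:ℝ)+1 := by linarith
  have key := rpow_pair_id k hk hm hn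
  rw [show (j:ℝ) + 1 + ((l:ℝ) - (j:ℝ) + 1) = (l:ℝ) + 2 from by ring] at key
  simp only [hG, cf]
  push_cast [Nat.cast_sub hjl]
  rw [show lam (1 + j) = lam (j + 1) by rw [Nat.add_comm]]
  rw [show ((1:ℝ)+(j:ℝ)) = (j:ℝ)+1 from by ring]
  have hπ0 : Real.pi ≠ 0 := ne_of_gt hπ
  have hL0 : ((l:ℝ)+2) ≠ 0 := by positivity
  field_simp at key ⊢
  linear_combination (lam (j+1) * lam (l-j+1) * Γ') * key
end Inner

section Final

variable {k : ℕ} {lam : ℕ → ℝ}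

lemma summable_abs_FF (hk : 2 ≤ k)
    (hlam : ∀ n : ℕ, 1 ≤ n → |lam n| ≤ (n.divisors.card : ℝ)) {y : ℝ} (hy : 0 < y) :
    Summable (fun p : ℕ × ℕ => ‖FF k lam p y‖) := by
  have hts := summable_abs_tF hk hlam hy
  have h : Summable (fun p : ℕ × ℕ => |tF k lam p.1 y| * |tF k lam p.2 y|) :=
    hts.mul_of_nonneg hts (fun _ => abs_nonneg _) (fun _ => abs_nonneg _)
  refine (h.mul_right (y^(k-1))).congr fun p => ?_
  rw [Real.norm_eq_abs, FF_eq, abs_mul, abs_mul, abs_of_nonneg (pow_nonneg hy.le _)]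

lemma FF_continuous (k : ℕ) (lam : ℕ → ℝ) (p : ℕ × ℕ) : Continuous (FF k lam p) := by
  unfold FF
  exact continuous_const.mul ((continuous_pow _).mul
    (Real.continuous_exp.comp (continuous_const.mul continuous_id).neg))

/-- Exact formula for the geodesic `L²`-mass above height `y₀`:
`∫_{y₀}^∞ |f(iy)|² y^k dy/y = (|a₁|²/(2π)) ∑_{l≥2} T(l) Γ(k, 2πy₀l)/l`,
with all sums and integrals converging absolutely. -/
theorem geodesic_mass_formula (k : ℕ) (hk : 2 ≤ k) (a₁ : ℂ) (lam : ℕ → ℝ)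
    (hlam : ∀ n : ℕ, 1 ≤ n → |lam n| ≤ (n.divisors.card : ℝ))
    (y₀ : ℝ) (hy₀ : 0 < y₀) :
    IntegrableOn (fun y : ℝ => ‖geodesicSeries k a₁ lam y‖ ^ 2 * y ^ k / y) (Set.Ioi y₀) ∧
    Summable (fun l : ℕ =>
      shiftedSum k lam (l + 2) * upperGamma (k : ℝ) (2 * Real.pi * y₀ * ((l : ℝ) + 2)) /
        ((l : ℝ) + 2)) ∧
    (∫ y in Set.Ioi y₀, ‖geodesicSeries k a₁ lam y‖ ^ 2 * y ^ k / y) =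
      ‖a₁‖ ^ 2 / (2 * Real.pi) *
        ∑' l : ℕ,
          shiftedSum k lam (l + 2) * upperGamma (k : ℝ) (2 * Real.pi * y₀ * ((l : ℝ) + 2)) /
            ((l : ℝ) + 2) := by
  have hπ := Real.pi_pos
  set S : ℕ → ℝ := fun l =>
    shiftedSum k lam (l + 2) * upperGamma (k : ℝ) (2 * Real.pi * y₀ * ((l : ℝ) + 2)) /
      ((l : ℝ) + 2) with hS
  have hFint : ∀ p : ℕ × ℕ, IntegrableOn (FF k lam p) (Ioi y₀) := FF_integrable k lam hy₀
  have hFnormsum := FF_norm_summable hk hlam hy₀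
  have hGsum : Summable (fun p : ℕ × ℕ => ∫ y in Ioi y₀, FF k lam p y) :=
    Summable.of_norm_bounded hFnormsum (fun p => norm_integral_le_integral_norm _)
  have hsig : Summable (fun x : Σ l : ℕ, Fin (l+1) => ∫ y in Ioi y₀, FF k lam (antidiagEquiv x) y) :=
    antidiagEquiv.summable_iff.mpr hGsum
  have hinner : ∀ l : ℕ,
      (∑' i : Fin (l+1), ∫ y in Ioi y₀, FF k lam (antidiagEquiv ⟨l, i⟩) y) = 1/(2*Real.pi) * S l :=
    fun l => inner_eq hk lam hy₀ l
  have hsigma_sum : Summable (fun l : ℕ =>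
      ∑' i : Fin (l+1), ∫ y in Ioi y₀, FF k lam (antidiagEquiv ⟨l, i⟩) y) := hsig.sigma
  have hP2 : Summable S := by
    have h1 : Summable (fun l : ℕ => 1/(2*Real.pi) * S l) := hsigma_sum.congr hinner
    refine (h1.mul_left (2*Real.pi)).congr fun l => ?_
    field_simp
  have hswap : ∫ y in Ioi y₀, (∑' p : ℕ × ℕ, FF k lam p y) =
      ∑' p : ℕ × ℕ, ∫ y in Ioi y₀, FF k lam p y :=
    (integral_tsum_of_summable_integral_norm hFint hFnormsum).symm
  have hregroup : ∑' p : ℕ × ℕ, ∫ y in Ioi y₀, FF k lam p y = ∑' l : ℕ, (1/(2*Real.pi) * S l) := by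
    rw [← antidiagEquiv.tsum_eq (fun p : ℕ × ℕ => ∫ y in Ioi y₀, FF k lam p y)]
    rw [hsig.tsum_sigma]
    exact tsum_congr hinner
  have hptwise : ∀ y ∈ Ioi y₀,
      ‖geodesicSeries k a₁ lam y‖ ^ 2 * y ^ k / y = ‖a₁‖^2 * ∑' p : ℕ × ℕ, FF k lam p y :=
    fun y hy => pointwise_eq hk hlam a₁ (hy₀.trans hy)
  -- measurability of the geodesic series
  have hgeo_meas : AEStronglyMeasurable (fun y => geodesicSeries k a₁ lam y)
      (volume.restrict (Ioi y₀)) := by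
    refine aestronglyMeasurable_of_tendsto_ae (u := Filter.atTop)
      (f := fun N y => a₁ * ∑ n ∈ Finset.range N, ((tF k lam n y : ℝ) : ℂ)) (fun N => ?_) ?_
    · refine Continuous.aestronglyMeasurable ?_
      refine continuous_const.mul ?_
      refine continuous_finset_sum _ (fun n _ => ?_)
      refine Complex.continuous_ofReal.comp ?_
      unfold tF
      fun_prop
    · filter_upwards [ae_restrict_mem measurableSet_Ioi] with y hy
      have hy0 : 0 < y := hy₀.trans hy
      have hsum : Summable fun n : ℕ => ((tF k lam n y : ℝ) : ℂ) :=
        Complex.summable_ofReal.mpr (summable_abs_tF hk hlam hy0).of_abs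
      have hgeo : geodesicSeries k a₁ lam y = a₁ * ∑' n : ℕ, ((tF k lam n y : ℝ) : ℂ) := by
        rw [geo_eq, Complex.ofReal_tsum]
      rw [hgeo]
      exact (hsum.hasSum.tendsto_sum_nat).const_mul a₁
  have hmeas : AEStronglyMeasurable (fun y : ℝ => ‖geodesicSeries k a₁ lam y‖ ^ 2 * y ^ k / y)
      (volume.restrict (Ioi y₀)) := by
    have h1 := hgeo_meas.norm
    have h2 : AEStronglyMeasurable
        (fun y : ℝ => ‖geodesicSeries k a₁ lam y‖ * ‖geodesicSeries k a₁ lam y‖ * y ^ k * y⁻¹)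
        (volume.restrict (Ioi y₀)) :=
      ((h1.mul h1).mul (measurable_id.pow_const k).aestronglyMeasurable).mul
        measurable_inv.aestronglyMeasurable
    refine h2.congr (Filter.Eventually.of_forall fun y => ?_)
    ring
  -- finiteness of the integral
  have hfin : HasFiniteIntegral (fun y : ℝ => ‖geodesicSeries k a₁ lam y‖ ^ 2 * y ^ k / y)
      (volume.restrict (Ioi y₀)) := by
    have hbb0 : ∀ p : ℕ × ℕ, 0 ≤ bb k y₀ p := by
      intro p
      have := Real.pi_pos
      unfold bb
      positivity
    have hFmeas : ∀ p : ℕ × ℕ, Measurable (fun y : ℝ => (‖FF k lam p y‖₊ : ENNReal)) :=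
      fun p => (FF_continuous k lam p).measurable.nnnorm.coe_nnreal_ennreal
    have step1 : ∀ᵐ y ∂(volume.restrict (Ioi y₀)),
        (‖‖geodesicSeries k a₁ lam y‖ ^ 2 * y ^ k / y‖₊ : ENNReal) ≤
          ENNReal.ofReal (‖a₁‖^2) * ∑' p : ℕ × ℕ, (‖FF k lam p y‖₊ : ENNReal) := by
      filter_upwards [ae_restrict_mem measurableSet_Ioi] with y hy
      have hy0 : 0 < y := hy₀.trans hy
      have hFsum : Summable (fun p : ℕ × ℕ => ‖FF k lam p y‖) := summable_abs_FF hk hlam hy0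
      have hFsum' : Summable (fun p : ℕ × ℕ => FF k lam p y) := by
        refine hFsum.of_norm
      have heq := hptwise y hy
      have hle : ‖geodesicSeries k a₁ lam y‖ ^ 2 * y ^ k / y ≤
          ‖a₁‖^2 * ∑' p : ℕ × ℕ, ‖FF k lam p y‖ := by
        rw [heq]
        refine mul_le_mul_of_nonneg_left ?_ (by positivity)
        exact Summable.tsum_le_tsum (fun p => le_abs_self _) hFsum' (by simpa [Real.norm_eq_abs] using hFsum)
      have h0 : 0 ≤ ‖geodesicSeries k a₁ lam y‖ ^ 2 * y ^ k / y := by positivity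
      calc (‖‖geodesicSeries k a₁ lam y‖ ^ 2 * y ^ k / y‖₊ : ENNReal)
          = ENNReal.ofReal (‖geodesicSeries k a₁ lam y‖ ^ 2 * y ^ k / y) := by
            rw [← Real.enorm_eq_ofReal h0, enorm_eq_nnnorm]
        _ ≤ ENNReal.ofReal (‖a₁‖^2 * ∑' p : ℕ × ℕ, ‖FF k lam p y‖) := ENNReal.ofReal_le_ofReal hle
        _ = ENNReal.ofReal (‖a₁‖^2) * ENNReal.ofReal (∑' p : ℕ × ℕ, ‖FF k lam p y‖) := by
            rw [ENNReal.ofReal_mul (by positivity)]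
        _ = ENNReal.ofReal (‖a₁‖^2) * ∑' p : ℕ × ℕ, (‖FF k lam p y‖₊ : ENNReal) := by
            rw [ENNReal.ofReal_tsum_of_nonneg (fun p => norm_nonneg _) hFsum]
            simp_rw [ofReal_norm, enorm_eq_nnnorm]
    have step2 : ∫⁻ y in Ioi y₀, ENNReal.ofReal (‖a₁‖^2) * ∑' p : ℕ × ℕ, (‖FF k lam p y‖₊ : ENNReal) =
        ENNReal.ofReal (‖a₁‖^2) * ∑' p : ℕ × ℕ, ∫⁻ y in Ioi y₀, (‖FF k lam p y‖₊ : ENNReal) := by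
      rw [lintegral_const_mul' _ _ ENNReal.ofReal_ne_top]
      rw [lintegral_tsum (fun p => (hFmeas p).aemeasurable)]
    have step3 : ∀ p : ℕ × ℕ, ∫⁻ y in Ioi y₀, (‖FF k lam p y‖₊ : ENNReal) ≤
        ENNReal.ofReal (bb k y₀ p) := by
      intro p
      simp_rw [← enorm_eq_nnnorm]
      rw [← ofReal_integral_norm_eq_lintegral_enorm (hFint p)]
      exact ENNReal.ofReal_le_ofReal (FF_norm_integral_le hk hlam hy₀ p)
    have step4 : (∑' p : ℕ × ℕ, ENNReal.ofReal (bb k y₀ p)) < ⊤ := by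
      rw [← ENNReal.ofReal_tsum_of_nonneg hbb0 (bb_summable k hy₀)]
      exact ENNReal.ofReal_lt_top
    rw [HasFiniteIntegral]
    calc ∫⁻ y in Ioi y₀, (‖‖geodesicSeries k a₁ lam y‖ ^ 2 * y ^ k / y‖₊ : ENNReal)
        ≤ ∫⁻ y in Ioi y₀, ENNReal.ofReal (‖a₁‖^2) * ∑' p : ℕ × ℕ, (‖FF k lam p y‖₊ : ENNReal) :=
          lintegral_mono_ae step1
      _ = ENNReal.ofReal (‖a₁‖^2) * ∑' p : ℕ × ℕ, ∫⁻ y in Ioi y₀, (‖FF k lam p y‖₊ : ENNReal) :=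
          step2
      _ ≤ ENNReal.ofReal (‖a₁‖^2) * ∑' p : ℕ × ℕ, ENNReal.ofReal (bb k y₀ p) := by
          exact mul_le_mul_right (ENNReal.tsum_le_tsum step3) _
      _ < ⊤ := ENNReal.mul_lt_top ENNReal.ofReal_lt_top step4
  have hint : IntegrableOn (fun y : ℝ => ‖geodesicSeries k a₁ lam y‖ ^ 2 * y ^ k / y) (Ioi y₀) :=
    ⟨hmeas, hfin⟩
  refine ⟨hint, hP2, ?_⟩
  rw [setIntegral_congr_fun measurableSet_Ioi hptwise]
  rw [MeasureTheory.integral_const_mul, hswap, hregroup, tsum_mul_left]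
  ring

end Final
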